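/- Let D be the deterministic NSMM automaton on {0,1}^{ℤ²}, let ε ∈ (0,1], and let μ be any probability measure on {0,1}^{ℤ²} invariant for the stochastic automaton N_ε D. Then for every integer L ≥ 1, μ(1_{S_{(0,−L),L}}) ≥ μ(1_{Σ_L}) ≥ ε^{6L+1}, where Σ_L = {(i,0) : −3L ≤ i ≤ 3L}. -/

import Mathlib

open MeasureTheory ENNReal

namespace CAPaper

/-- Majority of three Boolean values: `1` iff at least two of them are `1`. -/
def major (a b c : Bool) : Bool := (a && b) || ((a && c) || (b && c))

/-- The deterministic NEC (North-East-Center) automaton on `{0,1}^{ℤ²}`. -/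
def Dnec (x : ℤ × ℤ → Bool) : ℤ × ℤ → Bool :=
  fun p => major (x (p.1, p.2 + 1)) (x (p.1 + 1, p.2)) (x (p.1, p.2))

/-- The deterministic NSMM (North-South maximum of minima) automaton on `{0,1}^{ℤ²}`. -/
def Dnsmm (x : ℤ × ℤ → Bool) : ℤ × ℤ → Bool :=
  fun p => max (min (x (p.1, p.2)) (x (p.1 + 1, p.2)))
               (min (x (p.1, p.2 + 1)) (x (p.1 + 1, p.2 + 1)))

/-- Probability that, after the one-sided noise with parameter `ε` is applied to a
configuration whose value at a given site is `xi`, that site carries the value `b`. -/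
noncomputable def noiseProb (ε : ℝ) (xi b : Bool) : ℝ≥0∞ :=
  if xi then (if b then 1 else 0)
  else (if b then ENNReal.ofReal ε else ENNReal.ofReal (1 - ε))

/-- `ν` is the result of one step of the stochastic automaton `N_ε D` applied to `μ`
(first apply `D`, then independent one-sided noise at every site); since the noise measure
is a product measure, this is equivalent to specifying all cylinder probabilities of `ν`. -/
def IsStep {ι : Type*} (ε : ℝ) (D : (ι → Bool) → (ι → Bool)) (μ ν : Measure (ι → Bool)) : Prop :=
  ∀ (Λ : Finset ι) (b : ι → Bool),
    ν {y | ∀ i ∈ Λ, y i = b i} = ∫⁻ x, ∏ i ∈ Λ, noiseProb ε (D x i) (b i) ∂μ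

/-- `μ` is invariant for the stochastic automaton `N_ε D`. -/
def Invariant {ι : Type*} (ε : ℝ) (D : (ι → Bool) → (ι → Bool)) (μ : Measure (ι → Bool)) : Prop :=
  IsStep ε D μ μ

/-- The cylinder event: all sites of `Λ` carry the value 1. -/
def ones {ι : Type*} (Λ : Set ι) : Set (ι → Bool) := {x | ∀ i ∈ Λ, x i = true}

/-- The segment `Σ_L = {(i,0) : −3L ≤ i ≤ 3L}` of Example 2. -/
def Seg (L : ℕ) : Set (ℤ × ℤ) := {p | p.2 = 0 ∧ -3 * (L : ℤ) ≤ p.1 ∧ p.1 ≤ 3 * L}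

/-! Under `N_ε D` a site that `D` sets to `1` stays `1`, so `μ(1_Λ) ≥ μ(D⁻¹ 1_Λ)`, and every
site is `1` with probability at least `ε` whatever `D` does, so `μ(1_Λ) ≥ ε^|Λ|`. For NSMM,
ones on a box `[a,c] × [b,d]` force ones on `[a,c-1] × [b-1,d]` one step later; after `2L`
steps the segment `Σ_L` has become the box `[-3L,L] × [-2L,0]`, which contains the disc
`S_{(0,-L),L}`. -/

theorem measurableSet_ones {ι : Type*} {Λ : Set ι} (hΛ : Λ.Countable) :
    MeasurableSet (ones Λ : Set (ι → Bool)) := by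
  have : (ones Λ : Set (ι → Bool)) = ⋂ i ∈ Λ, (fun x => x i) ⁻¹' {true} := by
    ext x; simp [ones]
  rw [this]
  exact .biInter hΛ fun i _ => measurable_pi_apply i (measurableSet_singleton true)

theorem ones_anti {ι : Type*} {Λ Λ' : Set ι} (h : Λ ⊆ Λ') : ones Λ' ⊆ ones Λ :=
  fun _ hx i hi => hx i (h hi)

theorem noiseProb_true_true (ε : ℝ) : noiseProb ε true true = 1 := rfl

theorem ofReal_le_noiseProb_true {ε : ℝ} (hε1 : ε ≤ 1) (xi : Bool) :
    ENNReal.ofReal ε ≤ noiseProb ε xi true := by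
  cases xi
  · exact le_rfl
  · simpa [noiseProb] using hε1

namespace Invariant

variable {ι : Type*} {ε : ℝ} {D : (ι → Bool) → (ι → Bool)} {μ : Measure (ι → Bool)}

theorem measure_ones_eq (hinv : Invariant ε D μ) (Λ : Finset ι) :
    μ (ones ↑Λ) = ∫⁻ x, ∏ i ∈ Λ, noiseProb ε (D x i) true ∂μ :=
  hinv Λ fun _ => true

theorem measure_preimage_ones_le (hinv : Invariant ε D μ) (hD : Measurable D)
    (Λ : Finset ι) : μ (D ⁻¹' ones ↑Λ) ≤ μ (ones ↑Λ) := by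
  rw [hinv.measure_ones_eq, ← lintegral_indicator_one (hD (measurableSet_ones Λ.countable_toSet))]
  refine lintegral_mono (Set.indicator_le fun x hx => ?_)
  rw [Pi.one_apply, Finset.prod_eq_one fun i hi => by rw [hx i hi, noiseProb_true_true]]

theorem ofReal_pow_card_le_measure_ones [IsProbabilityMeasure μ] (hinv : Invariant ε D μ)
    (hε1 : ε ≤ 1) (Λ : Finset ι) : ENNReal.ofReal ε ^ Λ.card ≤ μ (ones ↑Λ) := by
  rw [hinv.measure_ones_eq]
  calc ENNReal.ofReal ε ^ Λ.card = ∫⁻ _, ENNReal.ofReal ε ^ Λ.card ∂μ := by simp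
    _ ≤ _ := lintegral_mono fun x => by
      rw [← Finset.prod_const]
      exact Finset.prod_le_prod' fun i _ => ofReal_le_noiseProb_true hε1 _

end Invariant

theorem measurable_Dnsmm : Measurable Dnsmm := by
  refine measurable_pi_lambda _ fun p => ?_
  have hmax : Measurable fun q : Bool × Bool × Bool × Bool =>
      max (min q.1 q.2.1) (min q.2.2.1 q.2.2.2) := measurable_of_countable _
  exact hmax.comp (f := fun x : ℤ × ℤ → Bool =>
      (x (p.1, p.2), x (p.1 + 1, p.2), x (p.1, p.2 + 1), x (p.1 + 1, p.2 + 1))) <|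
    (measurable_pi_apply _).prodMk <| (measurable_pi_apply _).prodMk <|
      (measurable_pi_apply _).prodMk (measurable_pi_apply _)

/-- A site of the new bottom row sees the old bottom row through its northern pair. -/
theorem Dnsmm_mem_ones_Icc {x : ℤ × ℤ → Bool} {a b c d : ℤ} (hbd : b ≤ d)
    (hx : x ∈ ones (Set.Icc (a, b) (c, d))) :
    Dnsmm x ∈ ones (Set.Icc (a, b - 1) (c - 1, d)) := by
  rintro ⟨p, q⟩ ⟨⟨hap, hbq⟩, ⟨hpc, hqd⟩⟩
  have hx' : ∀ p' q', a ≤ p' → p' ≤ c → b ≤ q' → q' ≤ d → x (p', q') = true :=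
    fun p' q' h₁ h₂ h₃ h₄ => hx _ ⟨⟨h₁, h₃⟩, ⟨h₂, h₄⟩⟩
  dsimp only at hap hbq hpc hqd
  simp only [Dnsmm, Bool.max_eq_or, Bool.min_eq_and, Bool.or_eq_true, Bool.and_eq_true]
  rcases eq_or_lt_of_le hbq with hq | hq
  · exact .inr ⟨hx' _ _ hap (by omega) (by omega) (by omega),
      hx' _ _ (by omega) (by omega) (by omega) (by omega)⟩
  · exact .inl ⟨hx' _ _ hap (by omega) (by omega) hqd,
      hx' _ _ (by omega) (by omega) (by omega) hqd⟩

theorem measure_ones_Icc_le_of_invariant {ε : ℝ} {μ : Measure (ℤ × ℤ → Bool)}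
    (hinv : Invariant ε Dnsmm μ) {a b c d : ℤ} (hbd : b ≤ d) (k : ℕ) :
    μ (ones (Set.Icc (a, b) (c, d))) ≤ μ (ones (Set.Icc (a, b - k) (c - k, d))) := by
  induction k with
  | zero => simp
  | succ k ih =>
    refine ih.trans ?_
    have hstep := hinv.measure_preimage_ones_le measurable_Dnsmm
      (Finset.Icc (a, b - (k + 1)) (c - (k + 1), d))
    simp only [Finset.coe_Icc] at hstep
    push_cast
    refine le_trans (measure_mono fun x hx => ?_) hstep
    simpa [sub_add_eq_sub_sub] using Dnsmm_mem_ones_Icc (by omega) hx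

theorem abs_le_of_sqrt_sq_add_sq_le {u v r : ℝ} (h : Real.sqrt (u ^ 2 + v ^ 2) ≤ r) :
    |u| ≤ r ∧ |v| ≤ r := by
  rw [← Real.sqrt_sq_eq_abs, ← Real.sqrt_sq_eq_abs]
  exact ⟨(Real.sqrt_le_sqrt (by nlinarith)).trans h, (Real.sqrt_le_sqrt (by nlinarith)).trans h⟩

theorem Seg_eq_Icc (L : ℕ) : Seg L = Set.Icc (-3 * (L : ℤ), 0) (3 * L, 0) := by
  ext ⟨p, q⟩
  simp only [Seg, Set.mem_ofPred_eq, Set.mem_Icc, Prod.mk_le_mk]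
  omega

theorem ball_subset_Icc (L : ℕ) :
    {p : ℤ × ℤ | Real.sqrt ((p.1 : ℝ) ^ 2 + ((p.2 : ℝ) + L) ^ 2) ≤ L} ⊆
      Set.Icc (-3 * (L : ℤ), -2 * L) (L, 0) := by
  rintro ⟨p, q⟩ (h : Real.sqrt ((p : ℝ) ^ 2 + ((q : ℝ) + L) ^ 2) ≤ L)
  obtain ⟨hp, hq⟩ := abs_le_of_sqrt_sq_add_sq_le h
  have hp' : |p| ≤ L := by exact_mod_cast hp
  have hq' : |q + L| ≤ L := by exact_mod_cast hq
  rw [abs_le] at hp' hq'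
  simp only [Set.mem_Icc, Prod.mk_le_mk]
  omega

theorem stmt15_general (ε : ℝ) (hε1 : ε ≤ 1)
    (μ : Measure (ℤ × ℤ → Bool)) (hprob : IsProbabilityMeasure μ)
    (hinv : Invariant ε Dnsmm μ) (L : ℕ) :
    μ (ones (Seg L)) ≤
        μ (ones {p : ℤ × ℤ |
          Real.sqrt ((p.1 : ℝ) ^ 2 + ((p.2 : ℝ) + L) ^ 2) ≤ L}) ∧
      ENNReal.ofReal ε ^ (6 * L + 1) ≤ μ (ones (Seg L)) := by
  rw [Seg_eq_Icc]
  constructor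
  · calc μ (ones (Set.Icc (-3 * (L : ℤ), 0) (3 * L, 0)))
        ≤ μ (ones (Set.Icc (-3 * (L : ℤ), -2 * L) (L, 0))) := by
          convert measure_ones_Icc_le_of_invariant hinv le_rfl (2 * L) using 5 <;> push_cast <;> ring
      _ ≤ _ := measure_mono (ones_anti (ball_subset_Icc L))
  · have hcard : (Finset.Icc (-3 * (L : ℤ), (0 : ℤ)) (3 * L, 0)).card = 6 * L + 1 := by
      simp only [Finset.card_Icc_prod, Finset.Icc_self, Finset.card_singleton, Int.card_Icc]
      omega
    have := hinv.ofReal_pow_card_le_measure_ones hε1 (Finset.Icc (-3 * (L : ℤ), 0) (3 * L, 0))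
    rwa [hcard, Finset.coe_Icc] at this

/-- every invariant probability measure of the NSMM automaton with one-sided
noise `ε` satisfies `μ(1_{S_{(0,−L),L}}) ≥ μ(1_{Σ_L}) ≥ ε^{6L+1}`. -/
theorem stmt15 (ε : ℝ) (hε : 0 < ε) (hε1 : ε ≤ 1)
    (μ : Measure (ℤ × ℤ → Bool)) (hprob : IsProbabilityMeasure μ)
    (hinv : Invariant ε Dnsmm μ) (L : ℕ) (hL : 1 ≤ L) :
    μ (ones (Seg L)) ≤
        μ (ones {p : ℤ × ℤ |
          Real.sqrt ((p.1 : ℝ) ^ 2 + ((p.2 : ℝ) + L) ^ 2) ≤ L}) ∧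
      ENNReal.ofReal ε ^ (6 * L + 1) ≤ μ (ones (Seg L)) :=
  stmt15_general ε hε1 μ hprob hinv L

end CAPaper
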